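/- arXiv:1311.3518 — 2 statements merged into one kernel-verified Lean document; each statement's English description precedes it below -/
import Mathlib

section
/- Let Γ be a finitely generated group acting continuously on a connected T1 topological space X, and let C ⊆ Γ be a subgroup of finite index. If every Γ-orbit is dense in X, then every C-orbit is dense in X. -/
/-!
Let `F` be the closure of a `C`-orbit. Since `C` has finite index, `F` has only finitely many
`Γ`-translates, so the union of the translates of its frontier is a closed, `Γ`-invariant set with
empty interior. Such a set cannot contain a point, whose `Γ`-orbit is dense; hence `F` has empty
frontier, is clopen and nonempty, and by connectedness is all of `X`.
-/

open Set Pointwise MulAction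

theorem Set.Finite.interior_sUnion_eq_empty {X : Type*} [TopologicalSpace X] {S : Set (Set X)}
    (hS : S.Finite) (hclosed : ∀ s ∈ S, IsClosed s) (hint : ∀ s ∈ S, interior s = ∅) :
    interior (⋃₀ S) = ∅ := by
  induction S, hS using Set.Finite.induction_on with
  | empty => simp
  | @insert s S _ _ ih =>
    rw [sUnion_insert, interior_union_isClosed_of_interior_empty (hclosed s (mem_insert s S))]
    · exact hint s (mem_insert s S)
    · exact ih (fun t ht => hclosed t (mem_insert_of_mem s ht))
        (fun t ht => hint t (mem_insert_of_mem s ht))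

namespace MulAction

variable {G α : Type*} [Group G] [MulAction G α]

theorem finite_orbit_of_finiteIndex_stabilizer (a : α) [(stabilizer G a).FiniteIndex] :
    (orbit G a).Finite :=
  have : Finite (orbit G a) := .of_equiv _ (orbitEquivQuotientStabilizer G a).symm
  toFinite _

theorem smul_sUnion_orbit (g : G) (s : Set α) : g • ⋃₀ orbit G s = ⋃₀ orbit G s := by
  rw [smul_set_sUnion, ← sUnion_image, image_smul, smul_orbit]

end MulAction

section DenseOrbits

variable {Γ X : Type*} [Group Γ] [TopologicalSpace X] [MulAction Γ X]

theorem frontier_smul [ContinuousConstSMul Γ X] (g : Γ) (s : Set X) :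
    frontier (g • s) = g • frontier s := by
  rw [frontier, frontier, closure_smul, interior_smul, smul_set_sdiff]

theorem eq_empty_of_isClosed_of_interior_eq_empty_of_smul_subset
    (h : ∀ x : X, Dense (orbit Γ x)) {B : Set X} (hB : IsClosed B) (hint : interior B = ∅)
    (hinv : ∀ g : Γ, g • B ⊆ B) : B = ∅ := by
  refine eq_empty_of_forall_notMem fun y hy => ?_
  have horbit : orbit Γ y ⊆ B := by
    rintro _ ⟨g, rfl⟩
    exact hinv g (smul_mem_smul_set hy)
  have : B = univ := eq_univ_of_univ_subset <| (h y).closure_eq ▸ hB.closure_subset_iff.2 horbit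
  rw [this, interior_univ] at hint
  exact (univ_eq_empty_iff.1 hint).false y

theorem eq_univ_of_finiteIndex_stabilizer [ContinuousConstSMul Γ X] [PreconnectedSpace X]
    (h : ∀ x : X, Dense (orbit Γ x)) {F : Set X} (hF : IsClosed F) (hne : F.Nonempty)
    [(stabilizer Γ F).FiniteIndex] : F = univ := by
  have hstab : stabilizer Γ F ≤ stabilizer Γ (frontier F) := fun g hg => by
    rw [mem_stabilizer_iff, ← frontier_smul, mem_stabilizer_iff.1 hg]
  have := Subgroup.finiteIndex_of_le hstab
  have hfin := finite_orbit_of_finiteIndex_stabilizer (G := Γ) (frontier F)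
  have hclosed : ∀ t ∈ orbit Γ (frontier F), IsClosed t := by
    rintro _ ⟨g, rfl⟩
    exact isClosed_frontier.smul g
  have hint : ∀ t ∈ orbit Γ (frontier F), interior t = ∅ := by
    rintro _ ⟨g, rfl⟩
    show interior (g • frontier F) = ∅
    rw [← frontier_smul]
    exact interior_frontier (hF.smul g)
  have hempty : ⋃₀ orbit Γ (frontier F) = ∅ :=
    eq_empty_of_isClosed_of_interior_eq_empty_of_smul_subset h
      (sUnion_eq_biUnion ▸ hfin.isClosed_biUnion hclosed)
      (hfin.interior_sUnion_eq_empty hclosed hint) fun g => (smul_sUnion_orbit g _).subset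
  have hfrontier : frontier F = ∅ :=
    subset_empty_iff.1 (hempty ▸ subset_sUnion_of_mem (mem_orbit_self _))
  exact (isClopen_iff_frontier_eq_empty.2 hfrontier).eq_univ hne

end DenseOrbits

theorem stmt1_general {Γ X : Type*} [Group Γ] [TopologicalSpace X]
    [ConnectedSpace X] [MulAction Γ X] [ContinuousConstSMul Γ X]
    (C : Subgroup Γ) [C.FiniteIndex]
    (h : ∀ x : X, Dense (MulAction.orbit Γ x)) :
    ∀ x : X, Dense (MulAction.orbit C x) := by
  intro x
  have hC : C ≤ stabilizer Γ (closure (orbit C x)) := fun c hc => by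
    rw [mem_stabilizer_iff, ← closure_smul]
    exact congrArg closure (smul_orbit (⟨c, hc⟩ : C) x)
  have := Subgroup.finiteIndex_of_le hC
  exact dense_iff_closure_eq.2 <| eq_univ_of_finiteIndex_stabilizer h isClosed_closure
    ⟨x, subset_closure (mem_orbit_self x)⟩

/-- If a finitely generated group Γ acts continuously on a connected T1 space with all
orbits dense, and C ≤ Γ has finite index, then all C-orbits are dense. -/
theorem stmt1 {Γ X : Type*} [Group Γ] [Group.FG Γ] [TopologicalSpace X]
    [ConnectedSpace X] [T1Space X] [MulAction Γ X] [ContinuousConstSMul Γ X]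
    (C : Subgroup Γ) [C.FiniteIndex]
    (h : ∀ x : X, Dense (MulAction.orbit Γ x)) :
    ∀ x : X, Dense (MulAction.orbit C x) :=
  stmt1_general C h
end

section
/- Let Γ be a finitely generated group with two ends and C ⊆ Γ an infinite subgroup. Suppose Γ acts continuously on a connected T1 topological space X. Then the Γ-orbits are dense in X if and only if the C-orbits are dense in X. -/
/-- A finitely generated group has two ends iff (Stallings) it has a finite normal
subgroup `F` with `Γ/F` isomorphic to `ℤ` or to the infinite dihedral group. -/
def HasTwoEnds (Γ : Type*) [Group Γ] : Prop :=
  ∃ F : Subgroup Γ, ∃ _ : F.Normal, Finite F ∧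
    (Nonempty ((Γ ⧸ F) ≃* Multiplicative ℤ) ∨ Nonempty ((Γ ⧸ F) ≃* DihedralGroup 0))

/-!
Infinite subgroups of `ℤ` and of the infinite dihedral group have finite index, and this passes
to extensions by finite normal subgroups, so `C` and its normal core `N` have finite index in `Γ`.

Suppose all `Γ`-orbits are dense and let `A z = closure (N • z)`. Normality of `N` gives
`g • A z = A (g • z)`, so `A x` has finitely many translates, all closed, and they cover `X`
because their union is closed and contains the dense orbit `Γ • x`. If `y ∈ A z`, then `z` lies
in some `g • A y`, whence `A y ⊆ A z ⊆ g • A y`; as `g ^ [Γ : N] ∈ N` fixes `A y`, all these sets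
are equal. Hence the translates of `A x` are pairwise equal or disjoint, the complement of `A x`
is a finite union of closed translates, and `A x` is clopen, hence all of `X`.
-/

open MulAction Pointwise

theorem Subgroup.relIndex_sup_ne_zero_of_finite {G : Type*} [Group G] (H K : Subgroup G)
    [K.Normal] [Finite K] : H.relIndex (H ⊔ K) ≠ 0 := by
  rw [relIndex, index_ne_zero_iff_finite]
  refine Finite.of_surjective (fun k : K => ((⟨k, (le_sup_right : K ≤ H ⊔ K) k.2⟩ : ↥(H ⊔ K)) :
    ↥(H ⊔ K) ⧸ H.subgroupOf (H ⊔ K))) ?_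
  rintro ⟨x, hx⟩
  rw [sup_comm, ← SetLike.mem_coe, normal_mul] at hx
  obtain ⟨k, hk, h, hh, rfl⟩ := hx
  refine ⟨⟨k, hk⟩, QuotientGroup.eq.mpr ?_⟩
  simpa [mem_subgroupOf] using hh

def InfiniteSubgroupsFiniteIndex (G : Type*) [Group G] : Prop :=
  ∀ H : Subgroup G, Infinite H → H.FiniteIndex

namespace InfiniteSubgroupsFiniteIndex

variable {G G' : Type*} [Group G] [Group G']

theorem of_injective {f : G →* G'} (hf : Function.Injective f)
    (h : InfiniteSubgroupsFiniteIndex G') : InfiniteSubgroupsFiniteIndex G := by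
  intro H hH
  have : (H.map f).FiniteIndex := h _ ((H.equivMapOfInjective f hf).symm.infinite_iff.mpr hH)
  rw [← H.comap_map_eq_self_of_injective hf, Subgroup.finiteIndex_iff, Subgroup.index_comap]
  exact Subgroup.isFiniteRelIndex_iff_relIndex_ne_zero.mp
    Subgroup.isFiniteRelIndex_of_finiteIndex

theorem of_finite_ker {f : G →* G'} [Finite f.ker]
    (h : InfiniteSubgroupsFiniteIndex G') : InfiniteSubgroupsFiniteIndex G := by
  intro H hH
  have hker : Finite (f.domRestrict H).ker :=
    Finite.of_injective (fun x => (⟨x.1.1, x.2⟩ : f.ker))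
      fun x y hxy => by simpa [Subtype.ext_iff] using hxy
  have hmap : Infinite (H.map f) := by
    rw [← MonoidHom.domRestrict_range, ← not_finite_iff_infinite]
    intro hfin
    have := (f.domRestrict H).finite_iff_finite_ker_range.mpr ⟨hker, hfin⟩
    exact not_finite H
  have hsup : (H ⊔ f.ker).index ≠ 0 :=
    left_ne_zero_of_mul ((H.index_map f).symm ▸ (h _ hmap).index_ne_zero)
  rw [Subgroup.finiteIndex_iff, ← Subgroup.relIndex_mul_index (le_sup_left (b := f.ker))]
  exact mul_ne_zero (H.relIndex_sup_ne_zero_of_finite f.ker) hsup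

end InfiniteSubgroupsFiniteIndex

namespace DihedralGroup

variable {m n : ℕ}

def map (f : ZMod m →+ ZMod n) : DihedralGroup m →* DihedralGroup n where
  toFun
    | r i => r (f i)
    | sr i => sr (f i)
  map_one' := congrArg r f.map_zero
  map_mul' := by rintro (i | i) (j | j) <;> simp [map_sub]

@[simp] theorem map_r (f : ZMod m →+ ZMod n) (i : ZMod m) : map f (r i) = r (f i) := rfl

@[simp] theorem map_sr (f : ZMod m →+ ZMod n) (i : ZMod m) : map f (sr i) = sr (f i) := rfl

theorem exists_r_mem_of_infinite (H : Subgroup (DihedralGroup 0)) [Infinite H] :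
    ∃ i : ZMod 0, i ≠ 0 ∧ r i ∈ H := by
  by_contra! hH
  have hinj : Function.Injective fun g : H =>
      match (g : DihedralGroup 0) with
      | r _ => false
      | sr _ => true := by
    rintro ⟨(i | i), hi⟩ ⟨(j | j), hj⟩ h
    all_goals simp only [Bool.false_eq_true, reduceCtorEq] at h
    · obtain rfl : i = 0 := by_contra fun hi0 => hH i hi0 hi
      obtain rfl : j = 0 := by_contra fun hj0 => hH j hj0 hj
      rfl
    · obtain rfl : i = j := (sub_eq_zero.mp <| by_contra fun hij =>
        hH _ hij (sr_mul_sr i j ▸ mul_mem hi hj)).symm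
      rfl
  have := Finite.of_injective _ hinj
  exact not_finite H

theorem infiniteSubgroupsFiniteIndex_zero : InfiniteSubgroupsFiniteIndex (DihedralGroup 0) := by
  intro H _
  obtain ⟨i, hi, hiH⟩ := exists_r_mem_of_infinite H
  have : NeZero i.natAbs := ⟨Int.natAbs_ne_zero.mpr hi⟩
  -- The kernel of reduction mod `|i|` (recall `ZMod 0 = ℤ`) consists of the powers of `r i`.
  refine Subgroup.finiteIndex_of_le
    (H := (map (ZMod.castHom (dvd_zero i.natAbs) (ZMod i.natAbs)).toAddMonoidHom).ker) ?_
  rintro (k | k) hk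
  · rw [MonoidHom.mem_ker, map_r, ← r_zero] at hk
    replace hk : Int.cast (R := ZMod i.natAbs) k = 0 := r.inj hk
    obtain ⟨j, rfl⟩ := Int.natAbs_dvd.mp ((ZMod.intCast_zmod_eq_zero_iff_dvd _ _).mp hk)
    convert zpow_mem hiH j using 1
    rw [r_zpow]
    rfl
  · rw [MonoidHom.mem_ker, map_sr, ← r_zero] at hk
    cases hk

end DihedralGroup

theorem infiniteSubgroupsFiniteIndex_multiplicative_int :
    InfiniteSubgroupsFiniteIndex (Multiplicative ℤ) := by
  -- `ℤ` embeds into the infinite dihedral group as its rotations.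
  refine DihedralGroup.infiniteSubgroupsFiniteIndex_zero.of_injective
    (f := zpowersHom _ (DihedralGroup.r 1)) ?_
  intro a b h
  simpa [DihedralGroup.r_one_zpow] using h

theorem Set.smul_set_eq_of_subset_of_pow_smul_set_eq {G α : Type*} [Group G] [MulAction G α]
    {s : Set α} {g : G} {n : ℕ} (hn : n ≠ 0) (hsub : s ⊆ g • s) (hpow : g ^ n • s = s) :
    g • s = s := by
  have hmono : ∀ k : ℕ, s ⊆ g ^ k • s := by
    intro k
    induction k with
    | zero => simp
    | succ k ih =>
      calc s ⊆ g • s := hsub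
        _ ⊆ g • g ^ k • s := Set.smul_set_mono ih
        _ = g ^ (k + 1) • s := by rw [smul_smul, ← pow_succ']
  obtain ⟨k, rfl⟩ := Nat.exists_eq_succ_of_ne_zero hn
  refine Set.Subset.antisymm ?_ hsub
  calc g • s ⊆ g • g ^ k • s := Set.smul_set_mono (hmono k)
    _ = s := by rw [smul_smul, ← pow_succ', hpow]

section

variable {Γ X : Type*} [Group Γ] [MulAction Γ X] [TopologicalSpace X] [ContinuousConstSMul Γ X]

theorem sUnion_orbit_eq_univ_of_dense_orbit {B : Set X} {x : X} (hx : x ∈ B)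
    (hdense : Dense (orbit Γ x)) (hB : IsClosed B) (hfin : (orbit Γ B).Finite) :
    ⋃₀ orbit Γ B = Set.univ := by
  have hclosed : IsClosed (⋃₀ orbit Γ B) :=
    Set.sUnion_eq_biUnion ▸ hfin.isClosed_biUnion (by rintro _ ⟨g, rfl⟩; exact hB.smul g)
  refine Set.eq_univ_of_univ_subset (hdense.closure_eq ▸ hclosed.closure_subset_iff.mpr ?_)
  rintro _ ⟨g, rfl⟩
  exact ⟨g • B, mem_orbit B g, Set.smul_mem_smul_set hx⟩

theorem IsBlock.eq_univ_of_isClosed_of_dense_orbit [ConnectedSpace X] {B : Set X}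
    (hB : IsBlock Γ B) {x : X} (hx : x ∈ B) (hdense : Dense (orbit Γ x)) (hclosed : IsClosed B)
    (hfin : (orbit Γ B).Finite) : B = Set.univ := by
  have hcover := sUnion_orbit_eq_univ_of_dense_orbit hx hdense hclosed hfin
  have hcompl : Bᶜ = ⋃₀ {C ∈ orbit Γ B | C ≠ B} := by
    ext y
    constructor
    · intro hy
      obtain ⟨C, hC, hyC⟩ := hcover.symm ▸ Set.mem_univ y
      exact ⟨C, ⟨hC, by rintro rfl; exact hy hyC⟩, hyC⟩
    · rintro ⟨_, ⟨⟨g, rfl⟩, hne⟩, hyC⟩ hyB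
      exact Set.disjoint_left.mp (hB.disjoint_smul_of_ne hne) hyC hyB
  have hopen : IsOpen B := by
    rw [← isClosed_compl_iff, hcompl, Set.sUnion_eq_biUnion]
    exact (hfin.subset (Set.sep_subset _ _)).isClosed_biUnion
      (by rintro _ ⟨⟨g, rfl⟩, -⟩; exact hclosed.smul g)
  exact IsClopen.eq_univ ⟨hclosed, hopen⟩ ⟨x, hx⟩

section Normal

variable (N : Subgroup Γ) [N.Normal]

theorem smul_closure_orbit_of_normal (g : Γ) (x : X) :
    g • closure (orbit N x) = closure (orbit N (g • x)) := by
  rw [← closure_smul, smul_orbit_eq_orbit_smul]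

theorem le_stabilizer_closure_orbit (x : X) : N ≤ stabilizer Γ (closure (orbit N x)) := by
  intro n hn
  rw [mem_stabilizer_iff, smul_closure_orbit_of_normal]
  exact congrArg closure (orbit_smul (⟨n, hn⟩ : N) x)

theorem closure_orbit_subset_of_mem {y z : X} (h : y ∈ closure (orbit N z)) :
    closure (orbit N y) ⊆ closure (orbit N z) := by
  refine closure_minimal ?_ isClosed_closure
  rintro _ ⟨n, rfl⟩
  exact le_stabilizer_closure_orbit N z n.2 ▸ Set.smul_mem_smul_set (a := (n : Γ)) h

theorem finite_orbit_closure_orbit [N.FiniteIndex] (x : X) :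
    (orbit Γ (closure (orbit N x))).Finite := by
  have := Subgroup.finiteIndex_of_le (le_stabilizer_closure_orbit N x)
  exact Set.finite_coe_iff.mp (Finite.of_equiv _ (orbitEquivQuotientStabilizer Γ _).symm)

variable [N.FiniteIndex]

theorem closure_orbit_eq_of_mem (hdense : ∀ x : X, Dense (orbit Γ x)) {y z : X}
    (h : y ∈ closure (orbit N z)) : closure (orbit N y) = closure (orbit N z) := by
  have hyz := closure_orbit_subset_of_mem N h
  obtain ⟨_, ⟨g, rfl⟩, hzg⟩ : z ∈ ⋃₀ orbit Γ (closure (orbit N y)) := by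
    rw [sUnion_orbit_eq_univ_of_dense_orbit (subset_closure (mem_orbit_self y)) (hdense y)
      isClosed_closure (finite_orbit_closure_orbit N y)]
    trivial
  replace hzg : z ∈ g • closure (orbit N y) := hzg
  have hzy : closure (orbit N z) ⊆ g • closure (orbit N y) := by
    rw [smul_closure_orbit_of_normal] at hzg ⊢
    exact closure_orbit_subset_of_mem N hzg
  have hg : g • closure (orbit N y) = closure (orbit N y) :=
    Set.smul_set_eq_of_subset_of_pow_smul_set_eq Subgroup.FiniteIndex.index_ne_zero
      (hyz.trans hzy) (le_stabilizer_closure_orbit N y (N.pow_index_mem g))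
  exact hyz.antisymm (hg ▸ hzy)

theorem isBlock_closure_orbit (hdense : ∀ x : X, Dense (orbit Γ x)) (x : X) :
    IsBlock Γ (closure (orbit N x)) := by
  rw [isBlock_iff_smul_eq_of_nonempty]
  rintro g ⟨y, hyg, hy⟩
  rw [smul_closure_orbit_of_normal] at hyg ⊢
  rw [← closure_orbit_eq_of_mem N hdense hyg, closure_orbit_eq_of_mem N hdense hy]

theorem dense_orbit_of_normal [ConnectedSpace X] (hdense : ∀ x : X, Dense (orbit Γ x)) (x : X) :
    Dense (orbit N x) := by
  rw [dense_iff_closure_eq]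
  exact IsBlock.eq_univ_of_isClosed_of_dense_orbit (isBlock_closure_orbit N hdense x)
    (subset_closure (mem_orbit_self x)) (hdense x) isClosed_closure (finite_orbit_closure_orbit N x)

end Normal

end

theorem HasTwoEnds.infiniteSubgroupsFiniteIndex {Γ : Type*} [Group Γ] (h : HasTwoEnds Γ) :
    InfiniteSubgroupsFiniteIndex Γ := by
  obtain ⟨F, _, _, hquot⟩ := h
  have hQ : InfiniteSubgroupsFiniteIndex (Γ ⧸ F) := by
    rcases hquot with ⟨⟨e⟩⟩ | ⟨⟨e⟩⟩
    · exact infiniteSubgroupsFiniteIndex_multiplicative_int.of_injective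
        (f := e.toMonoidHom) e.injective
    · exact DihedralGroup.infiniteSubgroupsFiniteIndex_zero.of_injective
        (f := e.toMonoidHom) e.injective
  have : Finite (QuotientGroup.mk' F).ker := by rwa [QuotientGroup.ker_mk']
  exact hQ.of_finite_ker (f := QuotientGroup.mk' F)

theorem stmt2_general {Γ X : Type*} [Group Γ] (h2 : HasTwoEnds Γ)
    (C : Subgroup Γ) (hC : Infinite C)
    [TopologicalSpace X] [ConnectedSpace X]
    [MulAction Γ X] [ContinuousConstSMul Γ X] :
    (∀ x : X, Dense (MulAction.orbit Γ x)) ↔ (∀ x : X, Dense (MulAction.orbit C x)) := by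
  refine ⟨fun hΓ x => ?_, fun hCdense x => (hCdense x).mono (orbit_subgroup_subset C x)⟩
  have : C.FiniteIndex := h2.infiniteSubgroupsFiniteIndex C hC
  refine (dense_orbit_of_normal C.normalCore hΓ x).mono ?_
  rintro _ ⟨n, rfl⟩
  exact ⟨⟨n, C.normalCore_le n.2⟩, rfl⟩

/-- For a finitely generated group Γ with two ends acting continuously on a connected
T1 space X, and an infinite subgroup C ⊆ Γ, the Γ-orbits are dense iff the C-orbits are. -/
theorem stmt2 {Γ X : Type*} [Group Γ] [Group.FG Γ] (h2 : HasTwoEnds Γ)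
    (C : Subgroup Γ) (hC : Infinite C)
    [TopologicalSpace X] [ConnectedSpace X] [T1Space X]
    [MulAction Γ X] [ContinuousConstSMul Γ X] :
    (∀ x : X, Dense (MulAction.orbit Γ x)) ↔ (∀ x : X, Dense (MulAction.orbit C x)) :=
  stmt2_general h2 C hC
end
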